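/- arXiv:1905.07919 — 14 statements merged into one kernel-verified Lean document; each statement's English description precedes it below -/
import Mathlib

section
/- Let A be a set and θ an (n+1)-ary operation on A. Define the (n+1)-ary operation Θ on the set Map(Aⁿ,A) of all maps Aⁿ → A by Θ(f₁,…,fₙ,g)(x₁,…,xₙ) = g(f₁(x₁,…,xₙ),…,fₙ(x₁,…,xₙ)), and define F : A → Map(Aⁿ,A) by F(b)(a₁,…,aₙ) = θ(a₁,…,aₙ,b). Then F preserves the operation, i.e. F(θ(b₁,…,bₙ,c)) = Θ(F(b₁),…,F(bₙ),F(c)) for all b₁,…,bₙ,c ∈ A, if and only if θ is 2-associative. -/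
/-- The map `F : A → Map(Aⁿ, A)`, `F b = θ(-,…,-,b)`, preserves the
operation `Θ` on `Map(Aⁿ, A)` (given by `Θ(f₁,…,fₙ,g)(x) = g(f₁ x,…,fₙ x)`)
if and only if `θ` is 2-associative. -/
theorem stmt_0 {A : Type*} {n : ℕ} (θ : (Fin n → A) → A → A)
    (F : A → ((Fin n → A) → A)) (hF : ∀ (b : A) (x : Fin n → A), F b x = θ x b)
    (Θ : (Fin n → ((Fin n → A) → A)) → ((Fin n → A) → A) → ((Fin n → A) → A))
    (hΘ : ∀ (f : Fin n → ((Fin n → A) → A)) (g : (Fin n → A) → A) (x : Fin n → A),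
      Θ f g x = g (fun i => f i x)) :
    (∀ (b : Fin n → A) (c : A), F (θ b c) = Θ (fun i => F (b i)) (F c)) ↔
    (∀ (a b : Fin n → A) (c : A), θ a (θ b c) = θ (fun i => θ a (b i)) c) := by
  constructor
  · intro h a b c
    have := congrFun (h b c) a
    rw [hF, hΘ] at this
    simp only [hF] at this
    rw [this]
  · intro h b c
    funext a
    rw [hF, hΘ, hF]
    simp only [hF]
    exact h a b c
end

section
/- Let A be a nonempty set, θ : Aⁿ⁺¹ → A any map, and e₁,…,eₙ ∈ A. Then there exist binary operations α₁,…,αₙ on A such that αᵢ(a,a) = eᵢ for all a ∈ A and all i, and θ(α₁(a,b),…,αₙ(a,b),b) = a for all a,b ∈ A, if and only if for every b ∈ A the map θ_b : Aⁿ → A, (a₁,…,aₙ) ↦ θ(a₁,…,aₙ,b), is surjective and θ(e₁,…,eₙ,b) = b for all b ∈ A. -/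
/-- For a nonempty set `A`, a map `θ : Aⁿ⁺¹ → A` and `e₁,…,eₙ ∈ A`,
there exist binary operations `αᵢ` with `αᵢ(a,a) = eᵢ` and
`θ(α₁(a,b),…,αₙ(a,b),b) = a` iff every `θ_b` is surjective and `θ(e₁,…,eₙ,b) = b`. -/
theorem stmt_1 {A : Type*} [Nonempty A] {n : ℕ} (θ : (Fin n → A) → A → A)
    (e : Fin n → A) :
    (∃ α : Fin n → A → A → A,
        (∀ (i : Fin n) (a : A), α i a a = e i) ∧
        (∀ a b : A, θ (fun i => α i a b) b = a)) ↔
    ((∀ b : A, Function.Surjective (fun x : Fin n → A => θ x b)) ∧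
      (∀ b : A, θ e b = b)) := by
  classical
  constructor
  · rintro ⟨α, hαe, hθ⟩
    refine ⟨fun b a => ⟨fun i => α i a b, hθ a b⟩, fun b => ?_⟩
    have := hθ b b
    simpa [funext fun i => hαe i b] using this
  · rintro ⟨hsurj, he⟩
    refine ⟨fun i a b => if a = b then e i else (hsurj b a).choose i, ?_, ?_⟩
    · intro i a; simp
    · intro a b
      by_cases h : a = b
      · subst h; simpa using he a
      · simpa [h] using (hsurj b a).choose_spec
end

section
/- Let A be a nonempty set, θ : Aⁿ⁺¹ → A any map, and e₁,…,eₙ ∈ A. If θ(e₁,…,eₙ,b) = b for all b ∈ A and θ(a,a,…,a,b) = a for all a,b ∈ A (the first n arguments all equal to a), then there exist binary operations α₁,…,αₙ on A such that αᵢ(a,a) = eᵢ for all a ∈ A and all i, and θ(α₁(a,b),…,αₙ(a,b),b) = a for all a,b ∈ A. -/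
/-- If `θ(e₁,…,eₙ,b) = b` and `θ(a,a,…,a,b) = a`, then there are
binary operations `αᵢ` with `αᵢ(a,a) = eᵢ` and `θ(α₁(a,b),…,αₙ(a,b),b) = a`. -/
theorem stmt_2 {A : Type*} [Nonempty A] {n : ℕ} (θ : (Fin n → A) → A → A)
    (e : Fin n → A)
    (h1 : ∀ b : A, θ e b = b)
    (h2 : ∀ a b : A, θ (fun _ => a) b = a) :
    ∃ α : Fin n → A → A → A,
      (∀ (i : Fin n) (a : A), α i a a = e i) ∧
      (∀ a b : A, θ (fun i => α i a b) b = a) := by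
  classical
  refine ⟨fun i a b => if a = b then e i else a, fun i a => by simp, fun a b => ?_⟩
  by_cases h : a = b
  · subst h; simpa using h1 a
  · simpa [h] using h2 a b
end

section
/- Let A carry a protomodular structure: an (n+1)-ary operation θ, binary operations α₁,…,αₙ and constants e₁,…,eₙ satisfying αᵢ(a,a) = eᵢ for all a ∈ A and θ(α₁(a,b),…,αₙ(a,b),b) = a for all a,b ∈ A. Then the following conditions are equivalent: (i) for every b ∈ A the map θ_b : Aⁿ → A, (x₁,…,xₙ) ↦ θ(x₁,…,xₙ,b), is a bijection; (ii) for all a,b ∈ A the equation θ(x₁,…,xₙ,b) = a has a unique solution (x₁,…,xₙ) ∈ Aⁿ; (iii) for all b,a₁,…,aₙ ∈ A there exists x ∈ A with αᵢ(x,b) = aᵢ for every i with 1 ≤ i ≤ n; (iv) the identity αᵢ(θ(a₁,…,aₙ,b),b) = aᵢ holds for all a₁,…,aₙ,b ∈ A and every i with 1 ≤ i ≤ n. -/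
/-- For a protomodular structure `(θ, α, e)` on `A`, the four
strictness conditions are equivalent. -/
theorem stmt_3 {A : Type*} {n : ℕ} (θ : (Fin n → A) → A → A)
    (α : Fin n → A → A → A) (e : Fin n → A)
    (hα : ∀ (i : Fin n) (a : A), α i a a = e i)
    (hθ : ∀ a b : A, θ (fun i => α i a b) b = a) :
    [ (∀ b : A, Function.Bijective (fun x : Fin n → A => θ x b)),
      (∀ a b : A, ∃! x : Fin n → A, θ x b = a),
      (∀ (b : A) (a : Fin n → A), ∃ x : A, ∀ i : Fin n, α i x b = a i),
      (∀ (a : Fin n → A) (b : A) (i : Fin n), α i (θ a b) b = a i) ].TFAE := by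
  tfae_have 1 → 4 := by
    intro h a b i
    have hinj := (h b).1
    have : (fun i => α i (θ a b) b) = a := hinj (hθ (θ a b) b)
    exact congrFun this i
  tfae_have 4 → 3 := by
    intro h b a
    exact ⟨θ a b, fun i => h a b i⟩
  tfae_have 3 → 2 := by
    intro h a b
    refine ⟨fun i => α i a b, hθ a b, ?_⟩
    intro x hx
    obtain ⟨z, hz⟩ := h b x
    have hzx : θ x b = z := by
      have := hθ z b
      calc θ x b = θ (fun i => α i z b) b := by
            congr 1; funext i; exact (hz i).symm
        _ = z := hθ z b
    funext i
    rw [hx] at hzx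
    rw [← hz i, ← hzx]
  tfae_have 2 → 1 := by
    intro h b
    constructor
    · intro x y hxy
      obtain ⟨w, hw, hu⟩ := h (θ y b) b
      exact (hu x hxy).trans (hu y rfl).symm
    · intro a
      exact ⟨fun i => α i a b, hθ a b⟩
  tfae_finish
end

section
/- Let A carry a strict protomodular structure (θ, α₁,…,αₙ, e₁,…,eₙ) such that θ is 2-associative. Then θ(a₁,…,aₙ,eᵢ) = aᵢ for all a₁,…,aₙ ∈ A and every i with 1 ≤ i ≤ n. -/
/-- A strict 2-associative protomodular structure satisfies
`θ(a₁,…,aₙ,eᵢ) = aᵢ`. -/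
theorem stmt_4 {A : Type*} {n : ℕ} (θ : (Fin n → A) → A → A)
    (α : Fin n → A → A → A) (e : Fin n → A)
    (hα : ∀ (i : Fin n) (a : A), α i a a = e i)
    (hθ : ∀ a b : A, θ (fun i => α i a b) b = a)
    (hstrict : ∀ b : A, Function.Bijective (fun x : Fin n → A => θ x b))
    (hassoc : ∀ (a b : Fin n → A) (c : A), θ a (θ b c) = θ (fun i => θ a (b i)) c) :
    ∀ (a : Fin n → A) (i : Fin n), θ a (e i) = a i := by
  intro a i
  have he : ∀ c : A, θ e c = c := by
    intro c
    have h := hθ c c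
    simpa [hα] using h
  have h := hassoc a e (e i)
  rw [he] at h
  have hinj := (hstrict (e i)).1 h.symm
  exact congrFun hinj i
end

section
/- Let n ≥ 2 and let A carry a strict protomodular structure (θ, α₁,…,αₙ, e₁,…,eₙ) such that θ is 2-associative. Then A is trivial, i.e. a = b for all a,b ∈ A. -/
/-- For `n ≥ 2`, any strict 2-associative protomodular algebra is
trivial. -/
theorem stmt_5 {A : Type*} {n : ℕ} (hn : 2 ≤ n) (θ : (Fin n → A) → A → A)
    (α : Fin n → A → A → A) (e : Fin n → A)
    (hα : ∀ (i : Fin n) (a : A), α i a a = e i)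
    (hθ : ∀ a b : A, θ (fun i => α i a b) b = a)
    (hstrict : ∀ b : A, Function.Bijective (fun x : Fin n → A => θ x b))
    (hassoc : ∀ (a b : Fin n → A) (c : A), θ a (θ b c) = θ (fun i => θ a (b i)) c) :
    ∀ a b : A, a = b := by
  intro a b
  have he : ∀ c : A, θ (fun i => e i) c = c := by
    intro c
    have h := hθ c c
    simpa [hα] using h
  have key : ∀ (x : Fin n → A) (i : Fin n), θ x (e i) = x i := by
    intro x i
    have h1 : θ (fun j => θ x (e j)) a = θ x a := by
      rw [← hassoc, he]
    have h2 := (hstrict a).injective h1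
    exact congrFun h2 i
  let i0 : Fin n := ⟨0, by omega⟩
  let i1 : Fin n := ⟨1, by omega⟩
  have hne : i0 ≠ i1 := by simp [i0, i1, Fin.ext_iff]
  have hx : θ (fun _ => a) (e i0) = θ (Function.update (fun _ => a) i1 b) (e i0) := by
    rw [key, key, Function.update_of_ne hne]
  have h3 := (hstrict (e i0)).injective hx
  have h4 := congrFun h3 i1
  simpa using h4
end

section
/- Let A be a set with a ternary operation μ satisfying the Mal'cev identities μ(a,b,b) = a and μ(a,a,b) = b for all a,b ∈ A. If μ is 2-associative, i.e. μ(a₁,a₂,μ(b₁,b₂,c)) = μ(μ(a₁,a₂,b₁),μ(a₁,a₂,b₂),c) for all a₁,a₂,b₁,b₂,c ∈ A, then A is trivial, i.e. a = b for all a,b ∈ A. -/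
/-- A 2-associative Mal'cev operation exists only on trivial sets. -/
theorem stmt_6 {A : Type*} (μ : A → A → A → A)
    (h1 : ∀ a b : A, μ a b b = a)
    (h2 : ∀ a b : A, μ a a b = b)
    (hassoc : ∀ a₁ a₂ b₁ b₂ c : A,
      μ a₁ a₂ (μ b₁ b₂ c) = μ (μ a₁ a₂ b₁) (μ a₁ a₂ b₂) c) :
    ∀ a b : A, a = b := by
  intro a b
  have := hassoc a b b b b
  simpa [h1, h2] using this
end

section
/- Let A carry a protomodular structure (θ, α₁,…,αₙ, e₁,…,eₙ) with θ 2-associative. Then for all b,c ∈ A, the element a = θ(α₁(c,θ(b,b,…,b)), α₂(c,θ(b,b,…,b)), …, αₙ(c,θ(b,b,…,b)), b), where θ(b,b,…,b) denotes θ applied to n+1 copies of b, satisfies θ(a,a,…,a,b) = c (the first n arguments all equal to a). In particular, for all b,c ∈ A there exists a ∈ A with θ(a,a,…,a,b) = c. -/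
/-- In a 2-associative protomodular algebra, for all `b, c` the
element `a = θ(α₁(c,θ(b,…,b)),…,αₙ(c,θ(b,…,b)),b)` satisfies `θ(a,…,a,b) = c`;
in particular such an `a` exists. -/
theorem stmt_8 {A : Type*} {n : ℕ} (θ : (Fin n → A) → A → A)
    (α : Fin n → A → A → A) (e : Fin n → A)
    (hα : ∀ (i : Fin n) (a : A), α i a a = e i)
    (hθ : ∀ a b : A, θ (fun i => α i a b) b = a)
    (hassoc : ∀ (a b : Fin n → A) (c : A), θ a (θ b c) = θ (fun i => θ a (b i)) c) :
    (∀ b c : A,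
        θ (fun _ => θ (fun i => α i c (θ (fun _ => b) b)) b) b = c) ∧
    (∀ b c : A, ∃ a : A, θ (fun _ => a) b = c) := by
  constructor
  · intro b c
    have h := hassoc (fun i => α i c (θ (fun _ => b) b)) (fun _ => b) b
    rw [hθ c (θ (fun _ => b) b)] at h
    exact h.symm
  · intro b c
    refine ⟨θ (fun i => α i c (θ (fun _ => b) b)) b, ?_⟩
    have h := hassoc (fun i => α i c (θ (fun _ => b) b)) (fun _ => b) b
    rw [hθ c (θ (fun _ => b) b)] at h
    exact h.symm
end

section
/- Let A carry a semi-abelian structure (θ, α₁,…,αₙ, e) with θ 2-associative. Then A with the binary operation a·b = θ(a,a,…,a,b) (the first n arguments all equal to a) is a group with identity element e, and for every b ∈ A the inverse of b is given by b⁻¹ = θ(α₁(e,θ(b,b,…,b)), α₂(e,θ(b,b,…,b)), …, αₙ(e,θ(b,b,…,b)), b), where θ(b,b,…,b) denotes θ applied to n+1 copies of b. -/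
/-- A 2-associative semi-abelian algebra is a group under
`a·b = θ(a,…,a,b)` with identity `e` and inverse
`b⁻¹ = θ(α₁(e,θ(b,…,b)),…,αₙ(e,θ(b,…,b)),b)`. -/
theorem stmt_10 {A : Type*} {n : ℕ} (θ : (Fin n → A) → A → A)
    (α : Fin n → A → A → A) (e : A)
    (hα : ∀ (i : Fin n) (a : A), α i a a = e)
    (hθ : ∀ a b : A, θ (fun i => α i a b) b = a)
    (hassoc : ∀ (a b : Fin n → A) (c : A), θ a (θ b c) = θ (fun i => θ a (b i)) c)
    (mul : A → A → A) (hmul : ∀ a b : A, mul a b = θ (fun _ => a) b)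
    (inv : A → A)
    (hinv : ∀ b : A, inv b = θ (fun i => α i e (θ (fun _ => b) b)) b) :
    (∀ a b c : A, mul (mul a b) c = mul a (mul b c)) ∧
    (∀ a : A, mul e a = a) ∧
    (∀ a : A, mul a e = a) ∧
    (∀ b : A, mul (inv b) b = e) ∧
    (∀ b : A, mul b (inv b) = e) := by
  have lid : ∀ a : A, mul e a = a := by
    intro a
    have h := hθ a a
    simp only [hα] at h
    rw [hmul]; exact h
  have assoc : ∀ a b c : A, mul (mul a b) c = mul a (mul b c) := by
    intro a b c
    simp only [hmul]
    rw [hassoc]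
  have linv : ∀ b : A, mul (inv b) b = e := by
    intro b
    have h1 : θ (fun i => α i e (θ (fun _ => b) b)) (θ (fun _ => b) b) = e :=
      hθ e _
    have h2 : θ (fun i => α i e (θ (fun _ => b) b)) (θ (fun _ => b) b)
        = θ (fun _ => inv b) b := by
      rw [hassoc]
      congr 1
      funext i
      rw [hinv b]
    rw [hmul, ← h2, h1]
  have rinv : ∀ b : A, mul b (inv b) = e := by
    intro b
    calc mul b (inv b) = mul e (mul b (inv b)) := (lid _).symm
      _ = mul (mul (inv (inv b)) (inv b)) (mul b (inv b)) := by rw [linv]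
      _ = mul (inv (inv b)) (mul (inv b) (mul b (inv b))) := assoc _ _ _
      _ = mul (inv (inv b)) (mul (mul (inv b) b) (inv b)) := by rw [assoc]
      _ = mul (inv (inv b)) (mul e (inv b)) := by rw [linv]
      _ = mul (inv (inv b)) (inv b) := by rw [lid]
      _ = e := linv _
  have rid : ∀ a : A, mul a e = a := by
    intro a
    rw [← linv a, ← assoc, rinv, lid]
  exact ⟨assoc, lid, rid, linv, rinv⟩
end

section
/- Let A carry a semi-abelian structure (θ, α₁,…,αₙ, e) with θ 2-associative. Then θ(a,a,…,a,e) = a for every a ∈ A (the first n arguments all equal to a). -/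
/-- In a 2-associative semi-abelian algebra, `θ(a,…,a,e) = a`. -/
theorem stmt_11 {A : Type*} {n : ℕ} (θ : (Fin n → A) → A → A)
    (α : Fin n → A → A → A) (e : A)
    (hα : ∀ (i : Fin n) (a : A), α i a a = e)
    (hθ : ∀ a b : A, θ (fun i => α i a b) b = a)
    (hassoc : ∀ (a b : Fin n → A) (c : A), θ a (θ b c) = θ (fun i => θ a (b i)) c) :
    ∀ a : A, θ (fun _ => a) e = a := by
  intro a
  have he : θ (fun _ => e) e = e := by
    have h := hθ e e
    simpa [hα] using h
  have key := hassoc (fun i => α i a e) (fun _ => e) e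
  rw [he, hθ a e] at key
  simpa [hθ a e] using key.symm
end

section
/- Let A carry a semi-abelian structure (θ, α₁,…,αₙ, e) with θ 2-associative. Then: (b) for all b,c ∈ A there is a unique a ∈ A with θ(a,a,…,a,b) = c (the first n arguments all equal to a); and (c) for all a,c ∈ A there is a unique b ∈ A with θ(a,a,…,a,b) = c. -/
/-- In a 2-associative semi-abelian algebra, (b) for all `b, c`
there is a unique `a` with `θ(a,…,a,b) = c`, and (c) for all `a, c` there is a
unique `b` with `θ(a,…,a,b) = c`. -/
theorem stmt_12 {A : Type*} {n : ℕ} (θ : (Fin n → A) → A → A)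
    (α : Fin n → A → A → A) (e : A)
    (hα : ∀ (i : Fin n) (a : A), α i a a = e)
    (hθ : ∀ a b : A, θ (fun i => α i a b) b = a)
    (hassoc : ∀ (a b : Fin n → A) (c : A), θ a (θ b c) = θ (fun i => θ a (b i)) c) :
    (∀ b c : A, ∃! a : A, θ (fun _ => a) b = c) ∧
    (∀ a c : A, ∃! b : A, θ (fun _ => a) b = c) := by
  classical
  -- the binary operation m x y = θ(x,…,x,y)
  let m : A → A → A := fun x y => θ (fun _ => x) y
  have hle : ∀ y, m e y = y := by
    intro y
    have h := hθ y y
    have h2 : (fun i => α i y y) = (fun _ : Fin n => e) := funext fun i => hα i y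
    rwa [h2] at h
  have hma : ∀ x y z, m x (m y z) = m (m x y) z := by
    intro x y z
    exact hassoc (fun _ => x) (fun _ => y) z
  -- left division: m (θ (α·(a,b)) e) b = a
  have hdiv : ∀ a b : A, m (θ (fun i => α i a b) e) b = a := by
    intro a b
    have h1 := hassoc (fun i => α i a b) (fun _ => e) b
    rw [show θ (fun _ : Fin n => e) b = b from hle b, hθ a b] at h1
    exact h1.symm
  have hlinv : ∀ x : A, ∃ z, m z x = e := fun x => ⟨_, hdiv e x⟩
  have hrinv : ∀ x z : A, m z x = e → m x z = e := by
    intro x z h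
    obtain ⟨w, hw⟩ := hlinv z
    calc m x z = m e (m x z) := (hle _).symm
      _ = m (m w z) (m x z) := by rw [hw]
      _ = m w (m z (m x z)) := (hma _ _ _).symm
      _ = m w (m (m z x) z) := congrArg (m w) (hma z x z)
      _ = m w (m e z) := by rw [h]
      _ = m w z := by rw [hle]
      _ = e := hw
  have hri : ∀ x : A, m x e = x := by
    intro x
    obtain ⟨z, hz⟩ := hlinv x
    calc m x e = m x (m z x) := by rw [hz]
      _ = m (m x z) x := hma _ _ _
      _ = m e x := by rw [hrinv x z hz]
      _ = x := hle x
  constructor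
  · intro b c
    refine ⟨θ (fun i => α i c b) e, hdiv c b, ?_⟩
    intro a ha
    obtain ⟨z, hz⟩ := hlinv b
    have hbz : m b z = e := hrinv b z hz
    calc a = m a e := (hri a).symm
      _ = m a (m b z) := by rw [hbz]
      _ = m (m a b) z := hma _ _ _
      _ = m c z := by rw [show m a b = c from ha]
      _ = m (m (θ (fun i => α i c b) e) b) z := by rw [hdiv c b]
      _ = m (θ (fun i => α i c b) e) (m b z) := (hma _ _ _).symm
      _ = m (θ (fun i => α i c b) e) e := by rw [hbz]
      _ = _ := hri _
  · intro a c
    obtain ⟨z, hz⟩ := hlinv a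
    have haz : m a z = e := hrinv a z hz
    refine ⟨m z c, ?_, ?_⟩
    · calc θ (fun _ => a) (m z c) = m a (m z c) := rfl
        _ = m (m a z) c := hma _ _ _
        _ = m e c := by rw [haz]
        _ = c := hle c
    · intro b hb
      calc b = m e b := (hle b).symm
        _ = m (m z a) b := by rw [hz]
        _ = m z (m a b) := (hma _ _ _).symm
        _ = m z c := by rw [show m a b = c from hb]
end

section
/- Let A be a set with a distinguished element e and a ternary operation μ satisfying the Mal'cev identities μ(a,b,b) = a and μ(a,a,b) = b for all a,b ∈ A, which is associative in the sense of Johnstone–Pedicchio: μ(a,b,μ(c,d,x)) = μ(μ(a,b,c),d,x) for all a,b,c,d,x ∈ A. Then A with the binary operation a·b = μ(a,e,b) is a group with identity element e, in which the inverse of a is μ(e,a,e). -/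
/-- A set with a constant `e` and a Johnstone–Pedicchio
associative Mal'cev operation `μ` is a group under `a·b = μ(a,e,b)` with
identity `e` and inverse `a⁻¹ = μ(e,a,e)`. -/
theorem stmt_13 {A : Type*} (e : A) (μ : A → A → A → A)
    (h1 : ∀ a b : A, μ a b b = a)
    (h2 : ∀ a b : A, μ a a b = b)
    (hassoc : ∀ a b c d x : A, μ a b (μ c d x) = μ (μ a b c) d x) :
    (∀ a b c : A, μ (μ a e b) e c = μ a e (μ b e c)) ∧
    (∀ a : A, μ e e a = a) ∧
    (∀ a : A, μ a e e = a) ∧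
    (∀ a : A, μ (μ e a e) e a = e) ∧
    (∀ a : A, μ a e (μ e a e) = e) := by
  refine ⟨fun a b c => (hassoc a e b e c).symm, h2 e, fun a => h1 a e,
    fun a => ?_, fun a => ?_⟩
  · rw [← hassoc e a e e a, h2, h1]
  · rw [hassoc a e e a e, h1, h2]
end

section
/- Let A carry a semi-abelian structure (θ, α₁,…,αₙ, e) with θ 2-associative, let G be the group obtained from A by setting a·b = θ(a,a,…,a,b) with identity e, and define γ : Gⁿ → G by γ(a₁,…,aₙ) = θ(a₁,…,aₙ,e). Then (G, γ, (αᵢ)) is an n-enriched group: γ(α₁(a,b),…,αₙ(a,b))·b = a for all a,b; αᵢ(a,a) = e for all a and all i; and γ(a₁,…,aₙ)·γ(b₁,…,bₙ) = γ(γ(a₁,…,aₙ)·b₁, γ(a₁,…,aₙ)·b₂, …, γ(a₁,…,aₙ)·bₙ) for all a₁,…,aₙ,b₁,…,bₙ. -/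
/-- Given a 2-associative semi-abelian structure on `A`, the
group `G = (A, a·b = θ(a,…,a,b), e)` together with `γ(a₁,…,aₙ) = θ(a₁,…,aₙ,e)`
and the operations `αᵢ` is an `n`-enriched group. -/
theorem stmt_14 {A : Type*} {n : ℕ} (hn : 2 ≤ n) (θ : (Fin n → A) → A → A)
    (α : Fin n → A → A → A) (e : A)
    (hα : ∀ (i : Fin n) (a : A), α i a a = e)
    (hθ : ∀ a b : A, θ (fun i => α i a b) b = a)
    (hassoc : ∀ (a b : Fin n → A) (c : A), θ a (θ b c) = θ (fun i => θ a (b i)) c)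
    (mul : A → A → A) (hmul : ∀ a b : A, mul a b = θ (fun _ => a) b)
    (γ : (Fin n → A) → A) (hγ : ∀ a : Fin n → A, γ a = θ a e) :
    (∀ a b : A, mul (γ (fun i => α i a b)) b = a) ∧
    (∀ (i : Fin n) (a : A), α i a a = e) ∧
    (∀ a b : Fin n → A,
      mul (γ a) (γ b) = γ (fun i => mul (γ a) (b i))) := by
  have he : ∀ c : A, θ (fun _ => e) c = c := by
    intro c
    have := hθ c c
    simpa [hα] using this
  have key : ∀ (a : Fin n → A) (c : A), mul (γ a) c = θ a c := by
    intro a c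
    rw [hmul, hγ]
    have : θ (fun i => θ a ((fun _ => e) i)) c = θ a (θ (fun _ => e) c) :=
      (hassoc a (fun _ => e) c).symm
    simpa [he] using this
  refine ⟨fun a b => by rw [key, hθ], hα, fun a b => ?_⟩
  calc mul (γ a) (γ b) = θ a (θ b e) := by rw [key, hγ]
    _ = θ (fun i => θ a (b i)) e := hassoc a b e
    _ = γ (fun i => mul (γ a) (b i)) := by rw [hγ]; simp [key]
end

section
/- Let A be a distributive lattice. Then the ternary operations θ₁(a,b,c) = (a ⊔ b) ⊓ c and θ₂(a,b,c) = (a ⊔ c) ⊓ b are both 2-associative, i.e. for each θ ∈ {θ₁, θ₂} and all a₁,a₂,b₁,b₂,c ∈ A one has θ(a₁,a₂,θ(b₁,b₂,c)) = θ(θ(a₁,a₂,b₁),θ(a₁,a₂,b₂),c). -/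
/-- On a distributive lattice, the ternary operations
`θ₁(a,b,c) = (a ⊔ b) ⊓ c` and `θ₂(a,b,c) = (a ⊔ c) ⊓ b` are 2-associative. -/
theorem stmt_19 {A : Type*} [DistribLattice A]
    (θ₁ θ₂ : A → A → A → A)
    (hθ₁ : ∀ a b c : A, θ₁ a b c = (a ⊔ b) ⊓ c)
    (hθ₂ : ∀ a b c : A, θ₂ a b c = (a ⊔ c) ⊓ b) :
    (∀ a₁ a₂ b₁ b₂ c : A,
      θ₁ a₁ a₂ (θ₁ b₁ b₂ c) = θ₁ (θ₁ a₁ a₂ b₁) (θ₁ a₁ a₂ b₂) c) ∧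
    (∀ a₁ a₂ b₁ b₂ c : A,
      θ₂ a₁ a₂ (θ₂ b₁ b₂ c) = θ₂ (θ₂ a₁ a₂ b₁) (θ₂ a₁ a₂ b₂) c) := by
  constructor <;> intro a₁ a₂ b₁ b₂ c <;> simp only [hθ₁, hθ₂]
  · rw [← inf_sup_left, inf_assoc]
  · calc (a₁ ⊔ (b₁ ⊔ c) ⊓ b₂) ⊓ a₂
        = (a₁ ⊔ b₁ ⊔ c) ⊓ (a₁ ⊔ b₂) ⊓ a₂ := by rw [sup_inf_left, sup_assoc]
      _ = (a₁ ⊔ b₁ ⊔ c) ⊓ a₂ ⊓ ((a₁ ⊔ b₂) ⊓ a₂) := by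
          rw [inf_assoc, inf_assoc, inf_left_comm a₂, inf_idem]
      _ = ((a₁ ⊔ b₁) ⊓ a₂ ⊔ c ⊓ a₂) ⊓ ((a₁ ⊔ b₂) ⊓ a₂) := by rw [inf_sup_right]
      _ = ((a₁ ⊔ b₁) ⊓ a₂ ⊔ c) ⊓ ((a₁ ⊔ b₂) ⊓ a₂) := by
          rw [sup_inf_left,
            sup_eq_right.mpr (inf_le_right : (a₁ ⊔ b₁) ⊓ a₂ ≤ a₂), inf_assoc,
            inf_left_comm a₂, inf_idem]
end
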